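/- arXiv:2508.11931 — 3 statements merged into one kernel-verified Lean document; each statement's English description precedes it below -/
import Mathlib

section
/- Let D be a finitely supported probability distribution over finite nonempty subsets of ℝ^d, Π the set of all maps π with π(A) ∈ conv(A) for each A in the support, and Ω = { E_{A∼D}[π(A)] : π ∈ Π }. Fix a vertex ψ of Ω and suppose φ ∈ ℝ^d satisfies ⟨ψ' − ψ, φ⟩ > 0 for all ψ' ∈ Ω with ψ' ≠ ψ. Define the linear-classifier policy π_φ by π_φ(A) ∈ argmin_{a ∈ A} ⟨a, φ⟩. Then E_{A∼D}[π_φ(A)] = ψ. -/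
open RealInnerProductSpace

/-- If `ψ` is a vertex of the mean-action polytope `Ω` and `φ` is an interior point of the
negated normal cone (i.e. `⟪ψ' - ψ, φ⟫ > 0` for all `ψ' ∈ Ω`, `ψ' ≠ ψ`), then the
linear classifier policy `π_φ` (choosing in each action set a minimizer of `⟪·, φ⟫`)
has mean action exactly `ψ`. -/
theorem stmt2 {d : ℕ} (S : Finset (Finset (EuclideanSpace ℝ (Fin d))))
    (hS : ∀ A ∈ S, A.Nonempty)
    (p : Finset (EuclideanSpace ℝ (Fin d)) → ℝ)
    (hp : ∀ A ∈ S, 0 ≤ p A) (hp1 : ∑ A ∈ S, p A = 1)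
    (Ω : Set (EuclideanSpace ℝ (Fin d)))
    (hΩ : Ω = {x : EuclideanSpace ℝ (Fin d) |
      ∃ π : Finset (EuclideanSpace ℝ (Fin d)) → EuclideanSpace ℝ (Fin d),
        (∀ A ∈ S, π A ∈ convexHull ℝ (A : Set (EuclideanSpace ℝ (Fin d)))) ∧
        x = ∑ A ∈ S, p A • π A})
    (ψ φ : EuclideanSpace ℝ (Fin d))
    (hψ : ψ ∈ Set.extremePoints ℝ Ω)
    (hφ : ∀ ψ' ∈ Ω, ψ' ≠ ψ → 0 < ⟪ψ' - ψ, φ⟫)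
    (πφ : Finset (EuclideanSpace ℝ (Fin d)) → EuclideanSpace ℝ (Fin d))
    (hπφ : ∀ A ∈ S, πφ A ∈ A ∧ ∀ a ∈ A, ⟪πφ A, φ⟫ ≤ ⟪a, φ⟫) :
    ∑ A ∈ S, p A • πφ A = ψ := by
  set x := ∑ A ∈ S, p A • πφ A with hx
  -- x ∈ Ω
  have hxΩ : x ∈ Ω := by
    rw [hΩ]
    exact ⟨πφ, fun A hA => subset_convexHull ℝ _ (hπφ A hA).1, rfl⟩
  -- minimality of ⟪πφ A, φ⟫ over the convex hull
  have hmin : ∀ A ∈ S, ∀ y ∈ convexHull ℝ (A : Set (EuclideanSpace ℝ (Fin d))),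
      ⟪πφ A, φ⟫ ≤ ⟪y, φ⟫ := by
    intro A hA y hy
    have hconv : Convex ℝ {z : EuclideanSpace ℝ (Fin d) | ⟪πφ A, φ⟫ ≤ ⟪z, φ⟫} := by
      have := convex_halfSpace_ge (𝕜 := ℝ)
        (f := fun z : EuclideanSpace ℝ (Fin d) => ⟪z, φ⟫)
        ⟨fun a b => inner_add_left a b φ, fun c a => real_inner_smul_left a φ c⟩
        (⟪πφ A, φ⟫)
      simpa using this
    have hsub : (A : Set (EuclideanSpace ℝ (Fin d))) ⊆
        {z | ⟪πφ A, φ⟫ ≤ ⟪z, φ⟫} := fun a ha => (hπφ A hA).2 a ha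
    exact convexHull_min hsub hconv hy
  -- ⟪x, φ⟫ ≤ ⟪ψ', φ⟫ for all ψ' ∈ Ω
  have hle : ∀ ψ' ∈ Ω, ⟪x, φ⟫ ≤ ⟪ψ', φ⟫ := by
    intro ψ' hψ'
    rw [hΩ] at hψ'
    obtain ⟨π, hπ, rfl⟩ := hψ'
    rw [hx, sum_inner, sum_inner]
    apply Finset.sum_le_sum
    intro A hA
    rw [real_inner_smul_left, real_inner_smul_left]
    exact mul_le_mul_of_nonneg_left (hmin A hA _ (hπ A hA)) (hp A hA)
  by_contra hne
  have h1 := hφ x hxΩ hne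
  have h2 := hle ψ hψ.1
  rw [inner_sub_left] at h1
  linarith
end

section
/- (Massart's lemma) Let V ⊂ ℝ^N be a finite set with max_{v ∈ V} ‖v‖₂ ≤ b√N. Then (1/N)·E_σ[ max_{v ∈ V} ∑_{i=1}^N σ_i v_i ] ≤ b·√(2 ln|V| / N), where σ₁,…,σ_N are independent Rademacher random variables. -/
/-!
Chernoff's method. For `t ∈ ℝ`, Jensen's inequality for `exp` bounds `exp (t E)`, where `E` is the
average of the maximum, by the average of `exp (t · max)`, which is at most the sum over `v ∈ V` of
the moment generating functions of the Rademacher sums `∑ σᵢ vᵢ`. These factor over the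
coordinates into `∏ cosh (t vᵢ) ≤ exp (t² ‖v‖² / 2)`, so `t E ≤ log |V| + t² b² N / 2`, and the
choice `t = E / (b² N)` gives `E² ≤ 2 b² N log |V|`.
-/

open Real Finset

def boolSign (c : Bool) : ℝ := if c then 1 else -1

lemma exp_avg_le_avg_exp {Ω : Type*} [Fintype Ω] [Nonempty Ω] (f : Ω → ℝ) :
    exp ((Fintype.card Ω : ℝ)⁻¹ * ∑ ω, f ω) ≤ (Fintype.card Ω : ℝ)⁻¹ * ∑ ω, exp (f ω) := by
  have hw : ∑ _ω : Ω, (Fintype.card Ω : ℝ)⁻¹ = 1 := by simp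
  simpa only [smul_eq_mul, mul_sum] using
    convexOn_exp.map_sum_le (t := univ) (fun _ _ => by positivity) hw fun _ _ => Set.mem_univ _

lemma exp_mul_sup'_le_sum_exp {α : Type*} (V : Finset α) (hV : V.Nonempty) (f : α → ℝ) (t : ℝ) :
    exp (t * V.sup' hV f) ≤ ∑ v ∈ V, exp (t * f v) := by
  obtain ⟨v, hv, hsup⟩ := exists_mem_eq_sup' hV f
  rw [hsup]
  exact single_le_sum (f := fun v => exp (t * f v)) (fun _ _ => (exp_pos _).le) hv

section Rademacher

variable {ι : Type*} [Fintype ι] [DecidableEq ι]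

lemma sum_exp_sum_boolSign_mul (a : ι → ℝ) :
    ∑ s : ι → Bool, exp (∑ i, boolSign (s i) * a i) = ∏ i, 2 * cosh (a i) := by
  simp_rw [exp_sum]
  rw [← Fintype.prod_sum (fun i c => exp (boolSign c * a i))]
  refine prod_congr rfl fun i _ => ?_
  rw [Fintype.sum_bool, cosh_eq]
  simp only [boolSign, Bool.false_eq_true, ↓reduceIte, one_mul, neg_one_mul]
  ring

lemma avg_exp_sum_boolSign_mul_le (a : ι → ℝ) :
    ((2 : ℝ) ^ Fintype.card ι)⁻¹ * ∑ s : ι → Bool, exp (∑ i, boolSign (s i) * a i)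
      ≤ exp (∑ i, a i ^ 2 / 2) := by
  rw [sum_exp_sum_boolSign_mul, prod_mul_distrib, prod_const, card_univ, inv_mul_cancel_left₀
    (by positivity), exp_sum]
  exact prod_le_prod (fun i _ => (cosh_pos _).le) fun i _ => cosh_le_exp_half_sq (a i)

lemma mul_avg_sup'_sum_boolSign_mul_le (V : Finset (ι → ℝ)) (hV : V.Nonempty) (c : ℝ)
    (hc : ∀ v ∈ V, ∑ i, v i ^ 2 ≤ c) (t : ℝ) :
    t * (((2 : ℝ) ^ Fintype.card ι)⁻¹ * ∑ s : ι → Bool,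
        V.sup' hV (fun v => ∑ i, boolSign (s i) * v i))
      ≤ log V.card + t ^ 2 * c / 2 := by
  set w : ℝ := ((2 : ℝ) ^ Fintype.card ι)⁻¹
  have hw : w = (Fintype.card (ι → Bool) : ℝ)⁻¹ := by simp [w]
  have hmgf : ∀ v ∈ V, w * ∑ s : ι → Bool, exp (t * ∑ i, boolSign (s i) * v i)
      ≤ exp (t ^ 2 * c / 2) := fun v hv => calc
    _ = w * ∑ s : ι → Bool, exp (∑ i, boolSign (s i) * (t * v i)) := by
      simp only [mul_sum, mul_left_comm t]
    _ ≤ exp (∑ i, (t * v i) ^ 2 / 2) := avg_exp_sum_boolSign_mul_le _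
    _ = exp (t ^ 2 * ∑ i, v i ^ 2 / 2) := by simp only [mul_sum, mul_pow, mul_div_assoc]
    _ ≤ exp (t ^ 2 * c / 2) := by
      rw [mul_div_assoc, ← sum_div]
      gcongr
      exact hc v hv
  have hcard : (0 : ℝ) < V.card := by exact_mod_cast hV.card_pos
  rw [← exp_le_exp, exp_add, exp_log hcard]
  calc _ ≤ w * ∑ s : ι → Bool, exp (t * V.sup' hV fun v => ∑ i, boolSign (s i) * v i) := by
        rw [mul_left_comm, mul_sum, hw]
        exact exp_avg_le_avg_exp (Ω := ι → Bool) _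
    _ ≤ w * ∑ s : ι → Bool, ∑ v ∈ V, exp (t * ∑ i, boolSign (s i) * v i) := by
        gcongr with s
        exact exp_mul_sup'_le_sum_exp ..
    _ = ∑ v ∈ V, w * ∑ s : ι → Bool, exp (t * ∑ i, boolSign (s i) * v i) := by
        rw [sum_comm, mul_sum]
    _ ≤ ∑ _v ∈ V, exp (t ^ 2 * c / 2) := sum_le_sum hmgf
    _ = V.card * exp (t ^ 2 * c / 2) := by rw [sum_const, nsmul_eq_mul]

end Rademacher

lemma le_sqrt_of_forall_mul_le_add_sq {E L c : ℝ} (hc : 0 ≤ c)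
    (h : ∀ t > 0, t * E ≤ L + t ^ 2 * c / 2) : E ≤ √(2 * L * c) := by
  by_contra! hlt
  have hE : 0 < E := (sqrt_nonneg _).trans_lt hlt
  rcases hc.eq_or_lt with rfl | hc
  · have := h ((|L| + 1) / E) (by positivity)
    rw [div_mul_cancel₀ _ hE.ne'] at this
    linarith [le_abs_self L]
  · have := h (E / c) (div_pos hE hc)
    have hsq : E ^ 2 ≤ 2 * L * c := by
      field_simp at this
      nlinarith
    exact hlt.not_ge ((le_sqrt hE.le (by nlinarith)).2 hsq)

theorem stmt9_general {N : ℕ} (V : Finset (Fin N → ℝ)) (hV : V.Nonempty) (b : ℝ)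
    (hb : ∀ v ∈ V, Real.sqrt (∑ i, (v i) ^ 2) ≤ b * Real.sqrt N) :
    (N : ℝ)⁻¹ * (((2 : ℝ) ^ N)⁻¹ * ∑ s : Fin N → Bool,
        V.sup' hV (fun v => ∑ i, (if s i then (1 : ℝ) else -1) * v i))
      ≤ b * Real.sqrt (2 * Real.log V.card / N) := by
  have hB : 0 ≤ b * √N := hV.elim fun v hv => (sqrt_le_iff.1 (hb v hv)).1
  have hc : ∀ v ∈ V, ∑ i, v i ^ 2 ≤ (b * √N) ^ 2 := fun v hv => (sqrt_le_iff.1 (hb v hv)).2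
  have hE := le_sqrt_of_forall_mul_le_add_sq (sq_nonneg _) fun t _ =>
    mul_avg_sup'_sum_boolSign_mul_le V hV _ hc t
  rw [Fintype.card_fin, sqrt_mul' _ (sq_nonneg _), sqrt_sq hB] at hE
  calc _ ≤ (N : ℝ)⁻¹ * (√(2 * log V.card) * (b * √N)) :=
        mul_le_mul_of_nonneg_left hE (by positivity)
    _ = b * √(2 * log V.card / N) := by
      rw [sqrt_div' _ (Nat.cast_nonneg N), div_eq_mul_one_div (√_), ← sqrt_div_self']
      ring

/-- Massart's lemma: if every `v ∈ V ⊂ ℝ^N` has Euclidean norm at most `b√N`, then the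
(normalized) Rademacher average of `V` is at most `b √(2 ln |V| / N)`. -/
theorem stmt9 {N : ℕ} (hN : 0 < N) (V : Finset (Fin N → ℝ)) (hV : V.Nonempty) (b : ℝ)
    (hb : ∀ v ∈ V, Real.sqrt (∑ i, (v i) ^ 2) ≤ b * Real.sqrt N) :
    (N : ℝ)⁻¹ * (((2 : ℝ) ^ N)⁻¹ * ∑ s : Fin N → Bool,
        V.sup' hV (fun v => ∑ i, (if s i then (1 : ℝ) else -1) * v i))
      ≤ b * Real.sqrt (2 * Real.log V.card / N) :=
  stmt9_general V hV b hb
end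

section
/- The class of linear multiclass classifiers C = { z ↦ argmax_{y ∈ [K]} ⟨g(z,y), φ⟩ : φ ∈ ℝ^d }, where g : Z × [K] → ℝ^d is a fixed class-sensitive feature map and ties are broken by taking the smallest index, has Natarajan dimension at most d. -/
open RealInnerProductSpace

/-- `C` N-shatters the finite set `T ⊆ Z`. -/
def NShattersOn {Z : Type*} {K : ℕ} (C : Set (Z → Fin K)) (T : Finset Z) : Prop :=
  ∃ f₁ f₂ : Z → Fin K, (∀ x ∈ T, f₁ x ≠ f₂ x) ∧
    ∀ B : Finset Z, B ⊆ T → ∃ c ∈ C,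
      (∀ x ∈ B, c x = f₁ x) ∧ (∀ x ∈ T, x ∉ B → c x = f₂ x)

private lemma stmt11_aux {Z : Type*} {d K : ℕ}
    (g : Z → Fin K → EuclideanSpace ℝ (Fin d))
    (c : EuclideanSpace ℝ (Fin d) → Z → Fin K)
    (hc : ∀ φ z, (∀ y, ⟪g z y, φ⟫ ≤ ⟪g z (c φ z), φ⟫) ∧
      ∀ y, (∀ y', ⟪g z y', φ⟫ ≤ ⟪g z y, φ⟫) → c φ z ≤ y)
    (f₁ f₂ : Z → Fin K) (T : Finset Z)
    (hsh : ∀ B : Finset Z, B ⊆ T → ∃ φ, (∀ x ∈ B, c φ x = f₁ x) ∧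
      (∀ x ∈ T, x ∉ B → c φ x = f₂ x))
    (a : T → ℝ)
    (ha : ∑ i : T, a i • (g i (f₁ i) - g i (f₂ i)) = 0) :
    ∀ i : T, (0 < a i → f₁ i ≤ f₂ i) ∧ (a i < 0 → f₂ i ≤ f₁ i) := by
  classical
  set B : Finset Z := (T.attach.filter (fun i => 0 < a i)).image Subtype.val with hB
  have hBT : B ⊆ T := by
    intro x hx
    simp only [hB, Finset.mem_image, Finset.mem_filter, Finset.mem_attach] at hx
    obtain ⟨j, _, rfl⟩ := hx
    exact j.2
  have hmemB : ∀ i : T, ((i : Z) ∈ B ↔ 0 < a i) := by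
    intro i
    simp only [hB, Finset.mem_image, Finset.mem_filter, Finset.mem_attach, true_and]
    constructor
    · rintro ⟨j, hj, hji⟩
      rwa [Subtype.ext hji] at hj
    · intro h; exact ⟨i, h, rfl⟩
  obtain ⟨φ, hφ1, hφ2⟩ := hsh B hBT
  set s : T → ℝ := fun i => a i * (⟪g i (f₁ i), φ⟫ - ⟪g i (f₂ i), φ⟫) with hs
  have hsum : ∑ i : T, s i = 0 := by
    have h0 := congrArg (fun v : EuclideanSpace ℝ (Fin d) => ⟪v, φ⟫) ha
    simp only [sum_inner, real_inner_smul_left, inner_sub_left, inner_zero_left] at h0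
    simpa [hs] using h0
  have hnonneg : ∀ i ∈ Finset.univ (α := T), 0 ≤ s i := by
    intro i _
    rcases lt_trichotomy (a i) 0 with h | h | h
    · have hnB : (i : Z) ∉ B := fun hmem => absurd ((hmemB i).mp hmem) (by linarith)
      have hcf : c φ i = f₂ i := hφ2 i i.2 hnB
      have := (hc φ i).1 (f₁ i)
      rw [hcf] at this
      have : ⟪g i (f₁ i), φ⟫ - ⟪g i (f₂ i), φ⟫ ≤ 0 := by linarith
      simp only [hs]
      nlinarith
    · simp [hs, h]
    · have hcf : c φ i = f₁ i := hφ1 i ((hmemB i).mpr h)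
      have := (hc φ i).1 (f₂ i)
      rw [hcf] at this
      have : 0 ≤ ⟪g i (f₁ i), φ⟫ - ⟪g i (f₂ i), φ⟫ := by linarith
      exact mul_nonneg (le_of_lt h) this
  have hzero : ∀ i : T, a i ≠ 0 → ⟪g i (f₁ i), φ⟫ = ⟪g i (f₂ i), φ⟫ := by
    intro i hi
    have := (Finset.sum_eq_zero_iff_of_nonneg hnonneg).mp hsum i (Finset.mem_univ i)
    have := mul_eq_zero.mp this
    rcases this with h | h
    · exact absurd h hi
    · linarith
  intro i
  constructor
  · intro h
    have heq := hzero i (ne_of_gt h)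
    have hcf : c φ i = f₁ i := hφ1 i ((hmemB i).mpr h)
    have hdom : ∀ y', ⟪g (i : Z) y', φ⟫ ≤ ⟪g (i : Z) (f₂ i), φ⟫ := by
      intro y'
      have := (hc φ i).1 y'
      rw [hcf] at this
      linarith
    have := (hc φ i).2 (f₂ i) hdom
    rwa [hcf] at this
  · intro h
    have heq := hzero i (ne_of_lt h)
    have hnB : (i : Z) ∉ B := fun hmem => absurd ((hmemB i).mp hmem) (by linarith)
    have hcf : c φ i = f₂ i := hφ2 i i.2 hnB
    have hdom : ∀ y', ⟪g (i : Z) y', φ⟫ ≤ ⟪g (i : Z) (f₁ i), φ⟫ := by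
      intro y'
      have := (hc φ i).1 y'
      rw [hcf] at this
      linarith
    have := (hc φ i).2 (f₁ i) hdom
    rwa [hcf] at this

/-- The class of linear multiclass classifiers `z ↦ argmax_{y ∈ [K]} ⟪g(z,y), φ⟫`
(ties broken towards the smallest index) has Natarajan dimension at most `d`. -/
theorem stmt11 {Z : Type*} {d K : ℕ} (hK : 0 < K)
    (g : Z → Fin K → EuclideanSpace ℝ (Fin d))
    (c : EuclideanSpace ℝ (Fin d) → Z → Fin K)
    (hc : ∀ φ z, (∀ y, ⟪g z y, φ⟫ ≤ ⟪g z (c φ z), φ⟫) ∧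
      ∀ y, (∀ y', ⟪g z y', φ⟫ ≤ ⟪g z y, φ⟫) → c φ z ≤ y) :
    ∀ T : Finset Z,
      NShattersOn {f : Z → Fin K | ∃ φ, f = c φ} T → T.card ≤ d := by
  classical
  intro T hT
  by_contra hlt
  push_neg at hlt
  obtain ⟨f₁, f₂, hne, hsh⟩ := hT
  have hsh' : ∀ B : Finset Z, B ⊆ T → ∃ φ, (∀ x ∈ B, c φ x = f₁ x) ∧
      (∀ x ∈ T, x ∉ B → c φ x = f₂ x) := by
    intro B hB
    obtain ⟨cf, hcf, h1, h2⟩ := hsh B hB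
    obtain ⟨φ, rfl⟩ := hcf
    exact ⟨φ, h1, h2⟩
  set w : T → EuclideanSpace ℝ (Fin d) := fun i => g i (f₁ i) - g i (f₂ i) with hw
  have hnli : ¬ LinearIndependent ℝ w := by
    intro h
    have hle := h.fintype_card_le_finrank
    rw [finrank_euclideanSpace_fin, Fintype.card_coe] at hle
    omega
  obtain ⟨a, hsum0, i₀, hi₀⟩ := Fintype.not_linearIndependent_iff.mp hnli
  have h1 := stmt11_aux g c hc f₁ f₂ T hsh' a hsum0
  have hsum0' : ∑ i : T, (-a i) • (g (i : Z) (f₁ i) - g (i : Z) (f₂ i)) = 0 := by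
    have h0 : ∑ i : T, (-a i) • w i = 0 := by
      have : ∀ i : T, (-a i) • w i = -(a i • w i) := fun i => neg_smul _ _
      rw [Finset.sum_congr rfl fun i _ => this i, Finset.sum_neg_distrib, hsum0, neg_zero]
    simpa only [hw] using h0
  have h2 := stmt11_aux g c hc f₁ f₂ T hsh' (fun i => -a i) hsum0'
  have heq : f₁ i₀ = f₂ i₀ := by
    rcases lt_or_gt_of_ne hi₀ with h | h
    · exact le_antisymm ((h2 i₀).1 (by simpa using h)) ((h1 i₀).2 h)
    · exact le_antisymm ((h1 i₀).1 h) ((h2 i₀).2 (by simpa using h))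
  exact hne i₀ i₀.2 heq
end
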